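/- Fourier slice theorem: for f ∈ L¹(ℝ²) and θ ∈ (0,π), the one-dimensional Fourier transform of s ↦ R f(s,θ) at frequency σ equals the two-dimensional Fourier transform of f evaluated at σ·ω(θ), i.e., ∫_ℝ R f(s,θ) e^{−i s σ} ds = ∫_{ℝ²} f(x) e^{−i σ (x·ω(θ))} dx. -/

import Mathlib

open MeasureTheory Real

/-- Fourier slice theorem: for `f ∈ L¹(ℝ²)` and `θ ∈ (0, π)`, the 1D Fourier transform of
`s ↦ R f (s, θ)` at frequency `σ` equals the 2D Fourier transform of `f` at `σ • ω θ`. -/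
theorem fourier_slice_theorem
    (f : ℝ × ℝ → ℝ) (hf : Integrable f)
    (θ : ℝ) (hθ : θ ∈ Set.Ioo 0 π) (σ : ℝ) :
    (∫ s : ℝ, ((∫ t : ℝ, f (s * cos θ - t * sin θ, s * sin θ + t * cos θ) : ℝ) : ℂ)
        * Complex.exp (-(s * σ : ℝ) * Complex.I))
      = ∫ x : ℝ × ℝ, (f x : ℂ)
        * Complex.exp (-(σ * (x.1 * cos θ + x.2 * sin θ) : ℝ) * Complex.I) := by
  -- rotation as a linear map
  set L : (ℝ × ℝ) →ₗ[ℝ] ℝ × ℝ :=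
    Matrix.toLin (Module.Basis.finTwoProd ℝ) (Module.Basis.finTwoProd ℝ) !![cos θ, -sin θ; sin θ, cos θ] with hL
  have hLapp : ∀ p : ℝ × ℝ, L p = (p.1 * cos θ - p.2 * sin θ, p.1 * sin θ + p.2 * cos θ) := by
    intro p
    rw [hL, Matrix.toLin_finTwoProd_apply]
    simp only [Prod.mk.injEq]
    constructor <;> ring
  have hdet : LinearMap.det L = 1 := by
    rw [hL, LinearMap.det_toLin, Matrix.det_fin_two_of]
    nlinarith [sin_sq_add_cos_sq θ]
  have hdet' : LinearMap.det L ≠ 0 := by rw [hdet]; norm_num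
  have hMP : MeasurePreserving L (volume : Measure (ℝ × ℝ)) volume := by
    refine ⟨L.continuous_of_finiteDimensional.measurable, ?_⟩
    rw [Measure.map_linearMap_addHaar_eq_smul_addHaar _ hdet', hdet]
    simp
  -- F is the 2D integrand
  set F : ℝ × ℝ → ℂ := fun x =>
    (f x : ℂ) * Complex.exp (-(σ * (x.1 * cos θ + x.2 * sin θ) : ℝ) * Complex.I) with hF
  have hFint : Integrable F := by
    have : Integrable (fun x : ℝ × ℝ =>
        Complex.exp (-(σ * (x.1 * cos θ + x.2 * sin θ) : ℝ) * Complex.I) * (f x : ℂ)) := by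
      apply Integrable.bdd_mul (c := 1) (hf.ofReal)
      · apply Continuous.aestronglyMeasurable
        fun_prop
      · refine Filter.Eventually.of_forall (fun x => ?_)
        rw [Complex.norm_exp]
        simp [mul_comm]
    simpa [hF, mul_comm] using this
  -- the embedding
  have hemb : MeasurableEmbedding L := by
    have := (LinearMap.equivOfDetNeZero L
      hdet').toContinuousLinearEquiv.toHomeomorph.measurableEmbedding
    exact this
  have key : ∫ p : ℝ × ℝ, F (L p) = ∫ x, F x := hMP.integral_comp hemb F
  -- integrability of F ∘ L on the product
  have hFLint : Integrable (F ∘ L) := (hMP.integrable_comp_emb hemb).2 hFint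
  -- key simplification: for x = L (s,t), σ * (x·ω) = s * σ
  have hexp : ∀ s t : ℝ, F (L (s, t)) =
      (f (s * cos θ - t * sin θ, s * sin θ + t * cos θ) : ℂ)
        * Complex.exp (-(s * σ : ℝ) * Complex.I) := by
    intro s t
    rw [hF]
    simp only [hLapp]
    have h : σ * ((s * cos θ - t * sin θ) * cos θ + (s * sin θ + t * cos θ) * sin θ) = s * σ := by
      linear_combination s * σ * (sin_sq_add_cos_sq θ)
    rw [h]
  calc
    (∫ s : ℝ, ((∫ t : ℝ, f (s * cos θ - t * sin θ, s * sin θ + t * cos θ) : ℝ) : ℂ)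
        * Complex.exp (-(s * σ : ℝ) * Complex.I))
      = ∫ s : ℝ, ∫ t : ℝ, F (L (s, t)) := by
        congr 1; funext s
        simp only [hexp]
        rw [integral_mul_const]
        congr 1
        exact (integral_ofReal (𝕜 := ℂ)).symm
    _ = ∫ p : ℝ × ℝ, F (L p) := by
        have h1 : Integrable (Function.uncurry fun s t => F (L (s, t)))
            ((volume : Measure ℝ).prod volume) := by
          rw [← Measure.volume_eq_prod]; exact hFLint
        rw [Measure.volume_eq_prod, integral_integral h1]
    _ = ∫ x, F x := key
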